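/- In the Racah algebra ℜ, each of Ω_A − D², Ω_B − D², Ω_C − D² lies in ℜ_3, and for every n ∈ ℕ with n ≥ 1 one has Ω_A^n − D^{2n} ∈ ℜ_{4n−1}. -/
import Mathlib


noncomputable section

/-- Generators of the Racah algebra. -/
inductive RGen : Type
  | A | B | C | D

namespace Racah

variable (F : Type) [Field F]

/-- The free algebra on the generators `A`, `B`, `C`, `D`. -/
abbrev FA := FreeAlgebra F RGen

def fA : FA F := FreeAlgebra.ι F RGen.A
def fB : FA F := FreeAlgebra.ι F RGen.B
def fC : FA F := FreeAlgebra.ι F RGen.C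
def fD : FA F := FreeAlgebra.ι F RGen.D

/-- α = [A,D] + AC − BA in the free algebra. -/
def fAl : FA F := (fA F * fD F - fD F * fA F) + fA F * fC F - fB F * fA F
/-- β = [B,D] + BA − CB in the free algebra. -/
def fBe : FA F := (fB F * fD F - fD F * fB F) + fB F * fA F - fC F * fB F
/-- γ = [C,D] + CB − AC in the free algebra. -/
def fGa : FA F := (fC F * fD F - fD F * fC F) + fC F * fB F - fA F * fC F

/-- The defining relations of the Racah algebra:
`[A,B] = [B,C] = [C,A] = 2D` and each of `α`, `β`, `γ` commutes with each of `A`, `B`, `C`, `D`. -/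
inductive Rel : FA F → FA F → Prop
  | AB : Rel (fA F * fB F - fB F * fA F) (2 * fD F)
  | BC : Rel (fB F * fC F - fC F * fB F) (2 * fD F)
  | CA : Rel (fC F * fA F - fA F * fC F) (2 * fD F)
  | cen (c x : FA F) (hc : c = fAl F ∨ c = fBe F ∨ c = fGa F)
      (hx : x = fA F ∨ x = fB F ∨ x = fC F ∨ x = fD F) :
      Rel (c * x) (x * c)

/-- The Racah algebra ℜ. -/
abbrev R := RingQuot (Rel F)

def A : R F := RingQuot.mkAlgHom F (Rel F) (fA F)
def B : R F := RingQuot.mkAlgHom F (Rel F) (fB F)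
def C : R F := RingQuot.mkAlgHom F (Rel F) (fC F)
def D : R F := RingQuot.mkAlgHom F (Rel F) (fD F)

/-- α = [A,D] + AC − BA. -/
def al : R F := (A F * D F - D F * A F) + A F * C F - B F * A F
/-- β = [B,D] + BA − CB. -/
def be : R F := (B F * D F - D F * B F) + B F * A F - C F * B F
/-- γ = [C,D] + CB − AC. -/
def ga : R F := (C F * D F - D F * C F) + C F * B F - A F * C F
/-- δ = A + B + C. -/
def de : R F := A F + B F + C F

end Racah

namespace Racah

variable (F : Type) [Field F]

/-- Ω_A = D² + (BAC + CAB)/2 + A² + Bγ − Cβ − Aδ. -/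
def OmA : R F := D F ^ 2 + (2 : F)⁻¹ • (B F * A F * C F + C F * A F * B F) + A F ^ 2
  + B F * ga F - C F * be F - A F * de F

/-- Ω_B = D² + (CBA + ABC)/2 + B² + Cα − Aγ − Bδ. -/
def OmB : R F := D F ^ 2 + (2 : F)⁻¹ • (C F * B F * A F + A F * B F * C F) + B F ^ 2
  + C F * al F - A F * ga F - B F * de F

/-- Ω_C = D² + (ACB + BCA)/2 + C² + Aβ − Bα − Cδ. -/
def OmC : R F := D F ^ 2 + (2 : F)⁻¹ • (A F * C F * B F + B F * C F * A F) + C F ^ 2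
  + A F * be F - B F * al F - C F * de F

end Racah

namespace Racah

variable (F : Type) [Field F]

/-- The monomial `A^i D^j B^k α^r δ^s β^t`. -/
def mon (i j k r s t : ℕ) : R F :=
  A F ^ i * D F ^ j * B F ^ k * al F ^ r * de F ^ s * be F ^ t

end Racah

namespace Racah

variable (F : Type) [Field F]

/-- The subspace ℜ_n of ℜ spanned by the monomials `A^i D^j B^k α^r δ^s β^t`
with `i + 2j + k + r + s + t ≤ n`. -/
def Rn (n : ℕ) : Submodule F (R F) :=
  Submodule.span F
    {x : R F | ∃ i j k r s t : ℕ, i + 2 * j + k + r + s + t ≤ n ∧ x = mon F i j k r s t}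

end Racah

namespace Racah

variable (F : Type) [Field F]

-- stage 1 lemmas
lemma mk_fAl : RingQuot.mkAlgHom F (Rel F) (fAl F) = al F := by
  simp [fAl, al, A, B, C, D, map_sub, map_add, map_mul]

lemma mk_fBe : RingQuot.mkAlgHom F (Rel F) (fBe F) = be F := by
  simp [fBe, be, A, B, C, D, map_sub, map_add, map_mul]

lemma mk_fGa : RingQuot.mkAlgHom F (Rel F) (fGa F) = ga F := by
  simp [fGa, ga, A, B, C, D, map_sub, map_add, map_mul]

lemma hAB : A F * B F - B F * A F = 2 * D F := by
  have := RingQuot.mkAlgHom_rel F (Rel.AB (F := F))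
  simpa [A, B, D, map_sub, map_mul, map_ofNat] using this

lemma hBC : B F * C F - C F * B F = 2 * D F := by
  have := RingQuot.mkAlgHom_rel F (Rel.BC (F := F))
  simpa [B, C, D, map_sub, map_mul, map_ofNat] using this

lemma hCA : C F * A F - A F * C F = 2 * D F := by
  have := RingQuot.mkAlgHom_rel F (Rel.CA (F := F))
  simpa [A, C, D, map_sub, map_mul, map_ofNat] using this

lemma cen_commute (c x : R F)
    (hc : c = al F ∨ c = be F ∨ c = ga F)
    (hx : x = A F ∨ x = B F ∨ x = C F ∨ x = D F) : Commute c x := by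
  obtain ⟨c', hc', rfl⟩ : ∃ c', (c' = fAl F ∨ c' = fBe F ∨ c' = fGa F) ∧
      RingQuot.mkAlgHom F (Rel F) c' = c := by
    rcases hc with rfl | rfl | rfl
    exacts [⟨fAl F, Or.inl rfl, mk_fAl F⟩, ⟨fBe F, Or.inr (Or.inl rfl), mk_fBe F⟩,
      ⟨fGa F, Or.inr (Or.inr rfl), mk_fGa F⟩]
  obtain ⟨x', hx', rfl⟩ : ∃ x', (x' = fA F ∨ x' = fB F ∨ x' = fC F ∨ x' = fD F) ∧
      RingQuot.mkAlgHom F (Rel F) x' = x := by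
    rcases hx with rfl | rfl | rfl | rfl
    exacts [⟨fA F, Or.inl rfl, rfl⟩, ⟨fB F, Or.inr (Or.inl rfl), rfl⟩,
      ⟨fC F, Or.inr (Or.inr (Or.inl rfl)), rfl⟩, ⟨fD F, Or.inr (Or.inr (Or.inr rfl)), rfl⟩]
  have := RingQuot.mkAlgHom_rel F (Rel.cen c' x' hc' hx')
  simpa [Commute, SemiconjBy, map_mul] using this

-- abbreviations for commute facts
lemma cAlA : Commute (al F) (A F) := cen_commute F _ _ (Or.inl rfl) (Or.inl rfl)
lemma cAlB : Commute (al F) (B F) := cen_commute F _ _ (Or.inl rfl) (Or.inr (Or.inl rfl))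
lemma cAlC : Commute (al F) (C F) := cen_commute F _ _ (Or.inl rfl) (Or.inr (Or.inr (Or.inl rfl)))
lemma cAlD : Commute (al F) (D F) := cen_commute F _ _ (Or.inl rfl) (Or.inr (Or.inr (Or.inr rfl)))
lemma cBeA : Commute (be F) (A F) := cen_commute F _ _ (Or.inr (Or.inl rfl)) (Or.inl rfl)
lemma cBeB : Commute (be F) (B F) := cen_commute F _ _ (Or.inr (Or.inl rfl)) (Or.inr (Or.inl rfl))
lemma cBeC : Commute (be F) (C F) := cen_commute F _ _ (Or.inr (Or.inl rfl)) (Or.inr (Or.inr (Or.inl rfl)))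
lemma cBeD : Commute (be F) (D F) := cen_commute F _ _ (Or.inr (Or.inl rfl)) (Or.inr (Or.inr (Or.inr rfl)))

lemma cAlDe : Commute (al F) (de F) := by
  unfold de; exact ((cAlA F).add_right (cAlB F)).add_right (cAlC F)
lemma cBeDe : Commute (be F) (de F) := by
  unfold de; exact ((cBeA F).add_right (cBeB F)).add_right (cBeC F)
lemma cAlBe : Commute (al F) (be F) := by
  unfold be
  exact (((((cAlB F).mul_right (cAlD F)).sub_right ((cAlD F).mul_right (cAlB F))).add_right
    ((cAlB F).mul_right (cAlA F))).sub_right ((cAlC F).mul_right (cAlB F)))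

lemma hBA : B F * A F = A F * B F - 2 * D F := by
  have h := hAB F; rw [sub_eq_iff_eq_add] at h; rw [h]; abel

lemma hCAe : C F * A F = A F * C F + 2 * D F := by
  have h := hCA F; rw [sub_eq_iff_eq_add] at h; rw [h]; abel

lemma hCB : C F * B F = B F * C F - 2 * D F := by
  have h := hBC F; rw [sub_eq_iff_eq_add] at h; rw [h]; abel

lemma hCde : C F = de F - A F - B F := by unfold de; abel

lemma cDeA : Commute (de F) (A F) := by
  unfold Commute SemiconjBy de
  rw [add_mul, add_mul, mul_add, mul_add, hBA, hCAe]; abel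

lemma cDeB : Commute (de F) (B F) := by
  unfold Commute SemiconjBy de
  rw [add_mul, add_mul, mul_add, mul_add, hBA, hCB]; abel

lemma cDeC : Commute (de F) (C F) := by
  unfold Commute SemiconjBy de
  rw [add_mul, add_mul, mul_add, mul_add, hCAe, hCB]; abel

lemma cDeD (h2 : (2 : F) ≠ 0) : Commute (de F) (D F) := by
  have key : (2 : R F) * (de F * D F) = (2 : R F) * (D F * de F) := by
    have c1 : Commute (de F) (A F * B F - B F * A F) :=
      ((cDeA F).mul_right (cDeB F)).sub_right ((cDeB F).mul_right (cDeA F))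
    rw [hAB] at c1
    calc (2 : R F) * (de F * D F) = (2 * de F) * D F := (mul_assoc _ _ _).symm
      _ = (de F * 2) * D F := by rw [(Commute.ofNat_left 2 (de F)).eq]
      _ = de F * (2 * D F) := mul_assoc _ _ _
      _ = (2 * D F) * de F := c1.eq
      _ = (2 : R F) * (D F * de F) := mul_assoc _ _ _
  have h2R : ∀ x y : R F, (2 : R F) * x = (2 : R F) * y → x = y := by
    intro x y h
    have hs : (2 : F) • x = (2 : F) • y := by
      rw [Algebra.smul_def, Algebra.smul_def, map_ofNat]; exact h
    calc x = (2 : F)⁻¹ • ((2 : F) • x) := by rw [smul_smul, inv_mul_cancel₀ h2, one_smul]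
      _ = (2 : F)⁻¹ • ((2 : F) • y) := by rw [hs]
      _ = y := by rw [smul_smul, inv_mul_cancel₀ h2, one_smul]
  exact h2R _ _ key

lemma hGa (h2 : (2 : F) ≠ 0) : ga F = - al F - be F := by
  have h0 : al F + be F + ga F = de F * D F - D F * de F := by
    unfold al be ga de
    rw [add_mul, add_mul, mul_add, mul_add]; abel
  rw [(cDeD F h2).eq, sub_self] at h0
  calc ga F = (al F + be F + ga F) - al F - be F := by abel
    _ = - al F - be F := by rw [h0]; abel

lemma hDA : D F * A F = A F * D F - al F + A F * de F - A F * A F - 2 * (A F * B F) + 2 * D F := by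
  have h0 : D F * A F = A F * D F + A F * C F - B F * A F - al F := by unfold al; abel
  rw [h0, hCde, hBA, mul_sub, mul_sub, two_mul (A F * B F)]; abel

lemma hBD : B F * D F = D F * B F + be F + B F * de F - B F * B F - 2 * (A F * B F) + 2 * D F := by
  have h0 : B F * D F = D F * B F - B F * A F + C F * B F + be F := by unfold be; abel
  rw [h0, hCde, hBA, sub_mul, sub_mul, (cDeB F).eq, two_mul (A F * B F)]; abel

-- swap helpers
lemma swap1 {x y : R F} (h : Commute x y) (n : ℕ) : x ^ n * y = y * x ^ n := (h.pow_left n).eq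

lemma swap2 {x y : R F} (h : Commute x y) (n : ℕ) (c : R F) :
    x ^ n * (y * c) = y * (x ^ n * c) := by rw [← mul_assoc, (h.pow_left n).eq, mul_assoc]

lemma sw2n (x c : R F) : x * (2 * c) = 2 * (x * c) := by
  rw [two_mul c, mul_add, ← two_mul]

-- exact monomial multiplication lemmas
lemma mon000 (i j k : ℕ) : mon F i j k 0 0 0 = A F ^ i * D F ^ j * B F ^ k := by
  simp [mon]

lemma monAD (i j : ℕ) : mon F i j 0 0 0 0 = A F ^ i * D F ^ j := by simp [mon]

lemma mon_mul_A (i r s t : ℕ) : mon F i 0 0 r s t * A F = mon F (i+1) 0 0 r s t := by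
  simp only [mon, pow_zero, mul_one, one_mul, pow_succ, mul_assoc,
    swap1 F (cBeA F) t, swap2 F (cDeA F) s, swap2 F (cAlA F) r]

lemma mon_mul_B (i j k r s t : ℕ) : mon F i j k r s t * B F = mon F i j (k+1) r s t := by
  simp only [mon, pow_succ, mul_assoc,
    swap1 F (cBeB F) t, swap2 F (cDeB F) s, swap2 F (cAlB F) r]

lemma mon_mul_D (h2 : (2:F) ≠ 0) (i j r s t : ℕ) :
    mon F i j 0 r s t * D F = mon F i (j+1) 0 r s t := by
  simp only [mon, pow_zero, mul_one, pow_succ, mul_assoc,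
    swap1 F (cBeD F) t, swap2 F (cDeD F h2) s, swap2 F (cAlD F) r]

lemma mon_mul_al (i j k r s t : ℕ) : mon F i j k r s t * al F = mon F i j k (r+1) s t := by
  simp only [mon, pow_succ, mul_assoc,
    swap1 F (cAlBe F).symm t, swap2 F (cAlDe F).symm s]

lemma mon_mul_de (i j k r s t : ℕ) : mon F i j k r s t * de F = mon F i j k r (s+1) t := by
  simp only [mon, pow_succ, mul_assoc, swap1 F (cBeDe F) t]

lemma mon_mul_be (i j k r s t : ℕ) : mon F i j k r s t * be F = mon F i j k r s (t+1) := by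
  simp only [mon, pow_succ, mul_assoc]

-- rewrite rules with a trailing factor
lemma hBAc (c : R F) : B F * (A F * c) = A F * (B F * c) - 2 * (D F * c) := by
  rw [← mul_assoc, hBA, sub_mul, mul_assoc, mul_assoc]

lemma hDAc (c : R F) : D F * (A F * c) = A F * (D F * c) - al F * c + A F * (de F * c)
    - A F * (A F * c) - 2 * (A F * (B F * c)) + 2 * (D F * c) := by
  rw [← mul_assoc, hDA]
  simp only [sub_mul, add_mul, mul_assoc]

lemma hBDc (c : R F) : B F * (D F * c) = D F * (B F * c) + be F * c + B F * (de F * c)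
    - B F * (B F * c) - 2 * (A F * (B F * c)) + 2 * (D F * c) := by
  rw [← mul_assoc, hBD]
  simp only [sub_mul, add_mul, mul_assoc]

-- the three straightening identities
lemma idA_k (i j k r s t : ℕ) : mon F i j (k+1) r s t * A F =
    A F ^ i * D F ^ j * B F ^ k * A F * B F * (al F ^ r * de F ^ s * be F ^ t)
    - 2 * (A F ^ i * D F ^ j * B F ^ k * D F * (al F ^ r * de F ^ s * be F ^ t)) := by
  simp only [mon, pow_succ, mul_assoc, swap1 F (cBeA F) t, swap2 F (cDeA F) s,
    swap2 F (cAlA F) r, hBAc, mul_sub, sw2n]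

lemma idA_j (i j r s t : ℕ) : mon F i (j+1) 0 r s t * A F =
    A F ^ i * D F ^ j * A F * D F * (al F ^ r * de F ^ s * be F ^ t)
    - A F ^ i * D F ^ j * al F * (al F ^ r * de F ^ s * be F ^ t)
    + A F ^ i * D F ^ j * A F * de F * (al F ^ r * de F ^ s * be F ^ t)
    - A F ^ i * D F ^ j * A F * A F * (al F ^ r * de F ^ s * be F ^ t)
    - 2 * (A F ^ i * D F ^ j * A F * B F * (al F ^ r * de F ^ s * be F ^ t))
    + 2 * (A F ^ i * D F ^ j * D F * (al F ^ r * de F ^ s * be F ^ t)) := by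
  simp only [mon, pow_zero, mul_one, pow_succ, mul_assoc, swap1 F (cBeA F) t,
    swap2 F (cDeA F) s, swap2 F (cAlA F) r, hDAc, mul_sub, mul_add, sw2n]

lemma idD_k (h2 : (2:F) ≠ 0) (i j k r s t : ℕ) : mon F i j (k+1) r s t * D F =
    A F ^ i * D F ^ j * B F ^ k * D F * B F * (al F ^ r * de F ^ s * be F ^ t)
    + A F ^ i * D F ^ j * B F ^ k * be F * (al F ^ r * de F ^ s * be F ^ t)
    + A F ^ i * D F ^ j * B F ^ k * B F * de F * (al F ^ r * de F ^ s * be F ^ t)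
    - A F ^ i * D F ^ j * B F ^ k * B F * B F * (al F ^ r * de F ^ s * be F ^ t)
    - 2 * (A F ^ i * D F ^ j * B F ^ k * A F * B F * (al F ^ r * de F ^ s * be F ^ t))
    + 2 * (A F ^ i * D F ^ j * B F ^ k * D F * (al F ^ r * de F ^ s * be F ^ t)) := by
  simp only [mon, pow_succ, mul_assoc, swap1 F (cBeD F) t, swap2 F (cDeD F h2) s,
    swap2 F (cAlD F) r, hBDc, mul_sub, mul_add, sw2n]

-- membership basics
lemma memMon {i j k r s t n : ℕ} (h : i + 2 * j + k + r + s + t ≤ n) :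
    mon F i j k r s t ∈ Rn F n := Submodule.subset_span ⟨i, j, k, r, s, t, h, rfl⟩

lemma RnMono {m n : ℕ} (h : m ≤ n) : Rn F m ≤ Rn F n :=
  Submodule.span_mono (fun x ⟨i, j, k, r, s, t, hw, hx⟩ => ⟨i, j, k, r, s, t, hw.trans h, hx⟩)

lemma mem2 {m : ℕ} {x : R F} (hx : x ∈ Rn F m) : (2 : R F) * x ∈ Rn F m := by
  rw [two_mul]; exact add_mem hx hx

lemma Rn_mul_closure {g : R F} {m d : ℕ}
    (hmon : ∀ i j k r s t : ℕ, i + 2 * j + k + r + s + t ≤ m →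
      mon F i j k r s t * g ∈ Rn F (m + d)) :
    ∀ x ∈ Rn F m, x * g ∈ Rn F (m + d) := by
  intro x hx
  refine Submodule.span_induction ?_ ?_ ?_ ?_ hx
  · rintro y ⟨i, j, k, r, s, t, hw, rfl⟩; exact hmon i j k r s t hw
  · rw [zero_mul]; exact zero_mem _
  · intro a b _ _ ha hb; rw [add_mul]; exact add_mem ha hb
  · intro f a _ ha; rw [smul_mul_assoc]; exact Submodule.smul_mem _ _ ha

lemma mulB_mem {m : ℕ} {x : R F} (hx : x ∈ Rn F m) : x * B F ∈ Rn F (m+1) :=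
  Rn_mul_closure F (fun i j k r s t hw => by
    rw [mon_mul_B]; exact memMon F (by omega)) x hx

lemma mulAl_mem {m : ℕ} {x : R F} (hx : x ∈ Rn F m) : x * al F ∈ Rn F (m+1) :=
  Rn_mul_closure F (fun i j k r s t hw => by
    rw [mon_mul_al]; exact memMon F (by omega)) x hx

lemma mulDe_mem {m : ℕ} {x : R F} (hx : x ∈ Rn F m) : x * de F ∈ Rn F (m+1) :=
  Rn_mul_closure F (fun i j k r s t hw => by
    rw [mon_mul_de]; exact memMon F (by omega)) x hx

lemma mulBe_mem {m : ℕ} {x : R F} (hx : x ∈ Rn F m) : x * be F ∈ Rn F (m+1) :=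
  Rn_mul_closure F (fun i j k r s t hw => by
    rw [mon_mul_be]; exact memMon F (by omega)) x hx

lemma mulAlpow_mem {m : ℕ} {x : R F} (hx : x ∈ Rn F m) (r : ℕ) :
    x * al F ^ r ∈ Rn F (m + r) := by
  induction r with
  | zero => simpa using hx
  | succ r ih => rw [pow_succ, ← mul_assoc, ← Nat.add_assoc]; exact mulAl_mem F ih

lemma mulDepow_mem {m : ℕ} {x : R F} (hx : x ∈ Rn F m) (s : ℕ) :
    x * de F ^ s ∈ Rn F (m + s) := by
  induction s with
  | zero => simpa using hx
  | succ s ih => rw [pow_succ, ← mul_assoc, ← Nat.add_assoc]; exact mulDe_mem F ih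

lemma mulBepow_mem {m : ℕ} {x : R F} (hx : x ∈ Rn F m) (t : ℕ) :
    x * be F ^ t ∈ Rn F (m + t) := by
  induction t with
  | zero => simpa using hx
  | succ t ih => rw [pow_succ, ← mul_assoc, ← Nat.add_assoc]; exact mulBe_mem F ih

lemma mulCn_mem {m : ℕ} {x : R F} (hx : x ∈ Rn F m) (r s t : ℕ) :
    x * (al F ^ r * de F ^ s * be F ^ t) ∈ Rn F (m + r + s + t) := by
  rw [← mul_assoc, ← mul_assoc]
  exact mulBepow_mem F (mulDepow_mem F (mulAlpow_mem F hx r) s) t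

-- main straightening lemma
lemma keyAD (h2 : (2:F) ≠ 0) (W : ℕ) :
    (∀ x ∈ Rn F W, x * A F ∈ Rn F (W+1)) ∧ (∀ x ∈ Rn F W, x * D F ∈ Rn F (W+2)) := by
  induction W using Nat.strong_induction_on with
  | _ W IH =>
  constructor
  · apply Rn_mul_closure
    intro i j k r s t hw
    match k, j with
    | k+1, j =>
      have hm0 : A F ^ i * D F ^ j * B F ^ k ∈ Rn F (i + 2*j + k) := by
        rw [← mon000]; exact memMon F (by omega)
      have hlt : i + 2*j + k < W := by omega
      have h1 := (IH _ hlt).1 _ hm0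
      have hD := (IH _ hlt).2 _ hm0
      rw [idA_k]
      exact sub_mem (RnMono F (by omega) (mulCn_mem F (mulB_mem F h1) r s t))
        (mem2 F (RnMono F (by omega) (mulCn_mem F hD r s t)))
    | 0, j+1 =>
      have hm0 : A F ^ i * D F ^ j ∈ Rn F (i + 2*j) := by
        rw [← monAD]; exact memMon F (by omega)
      have hlt1 : i + 2*j < W := by omega
      have h1 := (IH _ hlt1).1 _ hm0
      have hlt2 : i + 2*j + 1 < W := by omega
      have h1D := (IH _ hlt2).2 _ h1
      have h1A := (IH _ hlt2).1 _ h1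
      have h0D := (IH _ hlt1).2 _ hm0
      rw [idA_j]
      exact add_mem (sub_mem (sub_mem (add_mem
        (sub_mem (RnMono F (by omega) (mulCn_mem F h1D r s t))
          (RnMono F (by omega) (mulCn_mem F (mulAl_mem F hm0) r s t)))
        (RnMono F (by omega) (mulCn_mem F (mulDe_mem F h1) r s t)))
        (RnMono F (by omega) (mulCn_mem F h1A r s t)))
        (mem2 F (RnMono F (by omega) (mulCn_mem F (mulB_mem F h1) r s t))))
        (mem2 F (RnMono F (by omega) (mulCn_mem F h0D r s t)))
    | 0, 0 =>
      rw [mon_mul_A]; exact memMon F (by omega)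
  · apply Rn_mul_closure
    intro i j k r s t hw
    match k with
    | k+1 =>
      have hm0 : A F ^ i * D F ^ j * B F ^ k ∈ Rn F (i + 2*j + k) := by
        rw [← mon000]; exact memMon F (by omega)
      have hlt : i + 2*j + k < W := by omega
      have h1 := (IH _ hlt).1 _ hm0
      have hD := (IH _ hlt).2 _ hm0
      rw [idD_k F h2]
      exact add_mem (sub_mem (sub_mem (add_mem (add_mem
        (RnMono F (by omega) (mulCn_mem F (mulB_mem F hD) r s t))
        (RnMono F (by omega) (mulCn_mem F (mulBe_mem F hm0) r s t)))
        (RnMono F (by omega) (mulCn_mem F (mulDe_mem F (mulB_mem F hm0)) r s t)))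
        (RnMono F (by omega) (mulCn_mem F (mulB_mem F (mulB_mem F hm0)) r s t)))
        (mem2 F (RnMono F (by omega) (mulCn_mem F (mulB_mem F h1) r s t))))
        (mem2 F (RnMono F (by omega) (mulCn_mem F hD r s t)))
    | 0 =>
      rw [mon_mul_D F h2]; exact memMon F (by omega)

lemma mulA_mem (h2 : (2:F) ≠ 0) {m : ℕ} {x : R F} (hx : x ∈ Rn F m) :
    x * A F ∈ Rn F (m+1) := (keyAD F h2 m).1 x hx

lemma mulD_mem (h2 : (2:F) ≠ 0) {m : ℕ} {x : R F} (hx : x ∈ Rn F m) :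
    x * D F ∈ Rn F (m+2) := (keyAD F h2 m).2 x hx

lemma mulC_mem (h2 : (2:F) ≠ 0) {m : ℕ} {x : R F} (hx : x ∈ Rn F m) :
    x * C F ∈ Rn F (m+1) := by
  rw [hCde, mul_sub, mul_sub]
  exact sub_mem (sub_mem (mulDe_mem F hx) (mulA_mem F h2 hx)) (mulB_mem F hx)

lemma mulGa_mem (h2 : (2:F) ≠ 0) {m : ℕ} {x : R F} (hx : x ∈ Rn F m) :
    x * ga F ∈ Rn F (m+1) := by
  rw [hGa F h2]
  have e : x * (-al F - be F) = -(x * al F) - x * be F := by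
    noncomm_ring
    simp only [mul_smul_comm]
  rw [e]
  exact sub_mem (neg_mem (mulAl_mem F hx)) (mulBe_mem F hx)

lemma mulApow_mem (h2 : (2:F) ≠ 0) {m : ℕ} {x : R F} (hx : x ∈ Rn F m) (i : ℕ) :
    x * A F ^ i ∈ Rn F (m + i) := by
  induction i with
  | zero => simpa using hx
  | succ i ih => rw [pow_succ, ← mul_assoc, ← Nat.add_assoc]; exact mulA_mem F h2 ih

lemma mulDpow_mem (h2 : (2:F) ≠ 0) {m : ℕ} {x : R F} (hx : x ∈ Rn F m) (j : ℕ) :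
    x * D F ^ j ∈ Rn F (m + 2 * j) := by
  induction j with
  | zero => simpa using hx
  | succ j ih =>
    rw [pow_succ, ← mul_assoc]
    have := mulD_mem F h2 ih
    exact RnMono F (by omega) this

lemma mulBpow_mem {m : ℕ} {x : R F} (hx : x ∈ Rn F m) (k : ℕ) :
    x * B F ^ k ∈ Rn F (m + k) := by
  induction k with
  | zero => simpa using hx
  | succ k ih => rw [pow_succ, ← mul_assoc, ← Nat.add_assoc]; exact mulB_mem F ih

lemma mulMon_mem (h2 : (2:F) ≠ 0) {a b : ℕ} {x : R F} (hx : x ∈ Rn F a)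
    {i j k r s t : ℕ} (hw : i + 2 * j + k + r + s + t ≤ b) :
    x * mon F i j k r s t ∈ Rn F (a + b) := by
  simp only [mon, ← mul_assoc]
  refine RnMono F (show a + i + 2*j + k + r + s + t ≤ a + b by omega) ?_
  exact mulBepow_mem F (mulDepow_mem F (mulAlpow_mem F
    (mulBpow_mem F (mulDpow_mem F h2 (mulApow_mem F h2 hx i) j) k) r) s) t

lemma mulRn_mem (h2 : (2:F) ≠ 0) {a b : ℕ} {x y : R F} (hx : x ∈ Rn F a) (hy : y ∈ Rn F b) :
    x * y ∈ Rn F (a + b) := by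
  refine Submodule.span_induction ?_ ?_ ?_ ?_ hy
  · rintro z ⟨i, j, k, r, s, t, hw, rfl⟩; exact mulMon_mem F h2 hx hw
  · rw [mul_zero]; exact zero_mem _
  · intro u v _ _ hu hv; rw [mul_add]; exact add_mem hu hv
  · intro f u _ hu; rw [mul_smul_comm]; exact Submodule.smul_mem _ _ hu

lemma A_mem : Racah.A F ∈ Rn F 1 := by
  have h : mon F 1 0 0 0 0 0 = Racah.A F := by simp [mon]
  rw [← h]; exact memMon F (by omega)

lemma B_mem : Racah.B F ∈ Rn F 1 := by
  have h : mon F 0 0 1 0 0 0 = Racah.B F := by simp [mon]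
  rw [← h]; exact memMon F (by omega)

lemma de_mem : de F ∈ Rn F 1 := by
  have h : mon F 0 0 0 0 1 0 = de F := by simp [mon]
  rw [← h]; exact memMon F (by omega)

lemma C_mem : Racah.C F ∈ Rn F 1 := by
  rw [hCde]
  exact sub_mem (sub_mem (de_mem F) (A_mem F)) (B_mem F)

lemma A2_mem : Racah.A F ^ 2 ∈ Rn F 2 := by
  have h : mon F 2 0 0 0 0 0 = Racah.A F ^ 2 := by simp [mon]
  rw [← h]; exact memMon F (by omega)

lemma B2_mem : Racah.B F ^ 2 ∈ Rn F 2 := by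
  have h : mon F 0 0 2 0 0 0 = Racah.B F ^ 2 := by simp [mon]
  rw [← h]; exact memMon F (by omega)

lemma D2_mem : Racah.D F ^ 2 ∈ Rn F 4 := by
  have h : mon F 0 2 0 0 0 0 = Racah.D F ^ 2 := by simp [mon]
  rw [← h]; exact memMon F (by omega)

lemma one_mem' : (1 : R F) ∈ Rn F 0 := by
  have h : mon F 0 0 0 0 0 0 = (1 : R F) := by simp [mon]
  rw [← h]; exact memMon F (by omega)

lemma part1 (h2 : (2:F) ≠ 0) : OmA F - Racah.D F ^ 2 ∈ Rn F 3 := by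
  have e : OmA F - Racah.D F ^ 2 = (2 : F)⁻¹ • (B F * A F * C F + C F * A F * B F)
      + A F ^ 2 + B F * ga F - C F * be F - A F * de F := by
    unfold OmA; abel
  rw [e]
  refine sub_mem (sub_mem (add_mem (add_mem (Submodule.smul_mem _ _ (add_mem ?_ ?_))
    (RnMono F (by omega) (A2_mem F))) ?_) ?_) ?_
  · exact mulC_mem F h2 (mulA_mem F h2 (B_mem F))
  · exact mulB_mem F (mulA_mem F h2 (C_mem F))
  · exact RnMono F (by omega) (mulGa_mem F h2 (B_mem F))
  · exact RnMono F (by omega) (mulBe_mem F (C_mem F))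
  · exact RnMono F (by omega) (mulDe_mem F (A_mem F))

lemma part2 (h2 : (2:F) ≠ 0) : OmB F - Racah.D F ^ 2 ∈ Rn F 3 := by
  have e : OmB F - Racah.D F ^ 2 = (2 : F)⁻¹ • (C F * B F * A F + A F * B F * C F)
      + B F ^ 2 + C F * al F - A F * ga F - B F * de F := by
    unfold OmB; abel
  rw [e]
  refine sub_mem (sub_mem (add_mem (add_mem (Submodule.smul_mem _ _ (add_mem ?_ ?_))
    (RnMono F (by omega) (B2_mem F))) ?_) ?_) ?_
  · exact mulA_mem F h2 (mulB_mem F (C_mem F))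
  · exact mulC_mem F h2 (mulB_mem F (A_mem F))
  · exact RnMono F (by omega) (mulAl_mem F (C_mem F))
  · exact RnMono F (by omega) (mulGa_mem F h2 (A_mem F))
  · exact RnMono F (by omega) (mulDe_mem F (B_mem F))

lemma part3 (h2 : (2:F) ≠ 0) : OmC F - Racah.D F ^ 2 ∈ Rn F 3 := by
  have e : OmC F - Racah.D F ^ 2 = (2 : F)⁻¹ • (A F * C F * B F + B F * C F * A F)
      + C F ^ 2 + A F * be F - B F * al F - C F * de F := by
    unfold OmC; abel
  rw [e]
  have hC2 : Racah.C F ^ 2 ∈ Rn F 2 := by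
    rw [pow_two]; exact mulC_mem F h2 (C_mem F)
  refine sub_mem (sub_mem (add_mem (add_mem (Submodule.smul_mem _ _ (add_mem ?_ ?_))
    (RnMono F (by omega) hC2)) ?_) ?_) ?_
  · exact mulB_mem F (mulC_mem F h2 (A_mem F))
  · exact mulA_mem F h2 (mulC_mem F h2 (B_mem F))
  · exact RnMono F (by omega) (mulBe_mem F (A_mem F))
  · exact RnMono F (by omega) (mulAl_mem F (B_mem F))
  · exact RnMono F (by omega) (mulDe_mem F (C_mem F))

lemma OmA_mem (h2 : (2:F) ≠ 0) : OmA F ∈ Rn F 4 := by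
  have e : OmA F = (OmA F - Racah.D F ^ 2) + Racah.D F ^ 2 := by abel
  rw [e]
  exact add_mem (RnMono F (by omega) (part1 F h2)) (D2_mem F)

lemma OmApow_mem (h2 : (2:F) ≠ 0) (n : ℕ) : OmA F ^ n ∈ Rn F (4 * n) := by
  induction n with
  | zero => simpa using one_mem' F
  | succ n ih =>
    rw [pow_succ]
    have := mulRn_mem F h2 ih (OmA_mem F h2)
    exact RnMono F (by omega) this

lemma part4 (h2 : (2:F) ≠ 0) : ∀ n : ℕ, 1 ≤ n →
    OmA F ^ n - Racah.D F ^ (2 * n) ∈ Rn F (4 * n - 1) := by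
  intro n hn
  induction n, hn using Nat.le_induction with
  | base => simpa using part1 F h2
  | succ n hn ih =>
    have hid : OmA F ^ (n+1) - Racah.D F ^ (2 * (n+1)) =
        OmA F ^ n * (OmA F - Racah.D F ^ 2)
        + (OmA F ^ n - Racah.D F ^ (2 * n)) * Racah.D F ^ 2 := by
      rw [pow_succ, show 2 * (n+1) = 2*n + 2 by ring, pow_add]
      noncomm_ring
      simp only [mul_smul_comm, smul_mul_assoc]
      abel
    rw [hid]
    refine add_mem ?_ ?_
    · have := mulRn_mem F h2 (OmApow_mem F h2 n) (part1 F h2)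
      exact RnMono F (by omega) this
    · have h1 : (OmA F ^ n - Racah.D F ^ (2 * n)) * Racah.D F ^ 2 ∈ Rn F (4*n - 1 + 2 + 2) := by
        rw [pow_two, ← mul_assoc]
        exact mulD_mem F h2 (mulD_mem F h2 ih)
      exact RnMono F (by omega) h1

end Racah

open Racah in
/-- each of Ω_A − D², Ω_B − D², Ω_C − D² lies in ℜ_3, and for every n ≥ 1,
Ω_Aⁿ − D^{2n} ∈ ℜ_{4n−1}. -/
theorem stmt17 (F : Type) [Field F] (h2 : (2 : F) ≠ 0) :
    (OmA F - Racah.D F ^ 2 ∈ Rn F 3) ∧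
    (OmB F - Racah.D F ^ 2 ∈ Rn F 3) ∧
    (OmC F - Racah.D F ^ 2 ∈ Rn F 3) ∧
    (∀ n : ℕ, 1 ≤ n → OmA F ^ n - Racah.D F ^ (2 * n) ∈ Rn F (4 * n - 1)) :=
  ⟨part1 F h2, part2 F h2, part3 F h2, part4 F h2⟩
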